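/- arXiv:2003.04629 — 2 statements merged into one kernel-verified Lean document; each statement's English description precedes it below -/
import Mathlib

section
/- A word w over Σ is k-universal if and only if w can be factored as w = w_1 w_2 ... w_k u where each w_i satisfies alph(w_i) = Σ. -/
/-!
If `w` is `(k+1)`-universal, every letter occurs in `w`; cut `w` after its arch, the shortest
prefix containing every letter, whose last letter `a` occurs there for the first time. Since
`a :: x` embeds in `w` for every `x` of length `k`, the embedding of `x` starts after the arch,
so the rest of `w` is `k`-universal, and induction on `k` gives the factorisation. Conversely,
the `i`-th letter of any word of length `k` can be read in the factor `wᵢ`.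
-/

namespace List

variable {α : Type*}

def IsUniversal (k : ℕ) (w : List α) : Prop :=
  ∀ x : List α, x.length = k → x <+ w

theorem isUniversal_zero (w : List α) : IsUniversal 0 w := fun x hx => by
  simp [length_eq_zero_iff.mp hx]

theorem IsUniversal.mem {k : ℕ} {w : List α} (h : IsUniversal (k + 1) w) (a : α) : a ∈ w :=
  (h (replicate (k + 1) a) length_replicate).subset (mem_replicate.mpr ⟨k.succ_ne_zero, rfl⟩)

theorem isUniversal_succ_append {k : ℕ} {v w : List α} (hv : ∀ a, a ∈ v)
    (hw : IsUniversal k w) : IsUniversal (k + 1) (v ++ w)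
  | [], hx => absurd hx (by simp)
  | a :: x, hx => cons_sublist_iff.mpr ⟨v, w, rfl, hv a, hw x (by simpa using hx)⟩

theorem isUniversal_flatten_append {ws : List (List α)} (hws : ∀ v ∈ ws, ∀ a, a ∈ v)
    (u : List α) : IsUniversal ws.length (ws.flatten ++ u) := by
  induction ws with
  | nil => exact isUniversal_zero u
  | cons v ws ih =>
    rw [flatten_cons, append_assoc]
    exact isUniversal_succ_append (hws v mem_cons_self)
      (ih fun v' hv' => hws v' (mem_cons_of_mem v hv'))

/-- `p ++ [a]` is the arch of `w`: its shortest prefix containing every letter of `w`. -/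
theorem exists_arch {w : List α} (hw : w ≠ []) :
    ∃ p a r, w = p ++ a :: r ∧ a ∉ p ∧ ∀ b ∈ w, b ∈ p ∨ b = a := by
  induction w using reverseRecOn with
  | nil => exact absurd rfl hw
  | append_singleton w c ih =>
    by_cases hc : c ∈ w
    · obtain ⟨p, a, r, rfl, ha, hw⟩ := ih (ne_nil_of_mem hc)
      refine ⟨p, a, r ++ [c], by simp, ha, fun b hb => ?_⟩
      rcases mem_append.mp hb with hb | hb
      · exact hw b hb
      · exact hw b (mem_singleton.mp hb ▸ hc)
    · exact ⟨w, c, [], rfl, hc, fun b hb => by simpa using hb⟩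

theorem sublist_of_cons_sublist_append_cons {a : α} {x p r : List α} (ha : a ∉ p)
    (h : a :: x <+ p ++ a :: r) : x <+ r := by
  induction p with
  | nil => exact (cons_sublist_cons.mp h)
  | cons b p ih =>
    rw [mem_cons, not_or] at ha
    exact ih ha.2 (h.of_cons_of_ne ha.1)

theorem IsUniversal.exists_append [Nonempty α] {k : ℕ} {w : List α}
    (h : IsUniversal (k + 1) w) :
    ∃ p r, w = p ++ r ∧ (∀ a, a ∈ p) ∧ IsUniversal k r := by
  obtain ⟨p, a, r, rfl, ha, hw⟩ := exists_arch (ne_nil_of_mem (h.mem (Classical.arbitrary α)))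
  refine ⟨p ++ [a], r, by simp, fun b => ?_, fun x hx => ?_⟩
  · simpa using hw b (h.mem b)
  · exact sublist_of_cons_sublist_append_cons ha (h (a :: x) (by simp [hx]))

theorem IsUniversal.exists_flatten_append [Nonempty α] {k : ℕ} {w : List α}
    (h : IsUniversal k w) :
    ∃ (ws : List (List α)) (u : List α),
      ws.length = k ∧ (∀ v ∈ ws, ∀ a : α, a ∈ v) ∧ w = ws.flatten ++ u := by
  induction k generalizing w with
  | zero => exact ⟨[], w, rfl, by simp, rfl⟩
  | succ k ih =>
    obtain ⟨p, r, rfl, hp, hr⟩ := h.exists_append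
    obtain ⟨ws, u, rfl, hws, rfl⟩ := ih hr
    refine ⟨p :: ws, u, rfl, ?_, by simp⟩
    simpa [hp] using hws

end List

theorem universal_iff_factorisation_general {α : Type*} [Nonempty α]
    (w : List α) (k : ℕ) :
    (∀ x : List α, x.length = k → x.Sublist w) ↔
      ∃ (ws : List (List α)) (u : List α),
        ws.length = k ∧ (∀ v ∈ ws, ∀ a : α, a ∈ v) ∧ w = ws.flatten ++ u := by
  refine ⟨List.IsUniversal.exists_flatten_append, ?_⟩
  rintro ⟨ws, u, rfl, hws, rfl⟩
  exact List.isUniversal_flatten_append hws u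

/-- w is k-universal iff w = w₁ w₂ ⋯ w_k u where each w_i contains every letter
of the alphabet. -/
theorem universal_iff_factorisation {α : Type*} [Fintype α] [Nonempty α]
    (w : List α) (k : ℕ) :
    (∀ x : List α, x.length = k → x.Sublist w) ↔
      ∃ (ws : List (List α)) (u : List α),
        ws.length = k ∧ (∀ v ∈ ws, ∀ a : α, a ∈ v) ∧ w = ws.flatten ++ u :=
  universal_iff_factorisation_general w k
end

section
/- If a word w over Σ is circular k-universal (some conjugate of w is k-universal), then w itself is at least (k−1)-universal; equivalently, ι(w) ≥ ζ(w) − 1, where ι is the universality index and ζ is the circular universality index. -/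
/-- If some conjugate of w is k-universal, then w is (k−1)-universal. -/
theorem universal_of_conjugate {α : Type*} {x y : List α} {k : ℕ}
    (h : ∀ u : List α, u.length = k → u.Sublist (y ++ x)) :
    ∀ u : List α, u.length = k - 1 → u.Sublist (x ++ y) := by
  classical
  intro u hu
  set P : ℕ → Prop := fun j => (u.take j).Sublist x with hP
  set i := Nat.findGreatest P u.length with hidef
  have hi : P i := Nat.findGreatest_spec (Nat.zero_le _) (by simp [hP])
  have hile : i ≤ u.length := Nat.findGreatest_le _
  by_cases hy : (u.drop i).Sublist y
  · have := hi.append hy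
    rwa [List.take_append_drop] at this
  · have hilt : i < u.length := by
      rcases lt_or_eq_of_le hile with h' | h'
      · exact h'
      · exfalso
        apply hy
        have : u.take i = u := by rw [h', List.take_length]
        rw [h'] at hi ⊢
        simp
    have hk1 : k - 1 = u.length := hu.symm
    have hvlen : (u.drop i ++ u.take (i+1)).length = k := by
      simp only [List.length_append, List.length_drop, List.length_take]
      omega
    obtain ⟨v1, v2, heq, h1, h2⟩ := List.sublist_append_iff.mp (h _ hvlen)
    by_cases hl : (u.drop i).length ≤ v1.length
    · exfalso
      apply hy
      have hpre : u.drop i <+: v1 :=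
        List.prefix_of_prefix_length_le
          (heq ▸ List.prefix_append _ _) (List.prefix_append _ _) hl
      exact hpre.sublist.trans h1
    · have hsuf : u.take (i+1) <:+ v2 := by
        apply List.suffix_of_suffix_length_le
          (heq ▸ List.suffix_append _ _) (List.suffix_append _ _)
        have := congrArg List.length heq
        simp only [List.length_append] at this
        omega
      exfalso
      exact Nat.findGreatest_is_greatest (lt_add_one i) hilt (hsuf.sublist.trans h2)
end
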